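/- Two elements ((m,k),0) and ((m',k'),0) of G lying in level 0 are φ-twisted-conjugate via an element of level 0 if and only if m+k ≡ m'+k' (mod 2). -/

import Mathlib

/-- The automorphism group structure on `AddAut A` (composition), as in older Mathlib. -/
instance AddAut.group {A : Type*} [Add A] : Group (AddAut A) where
  mul g h := AddEquiv.trans h g
  one := AddEquiv.refl _
  inv := AddEquiv.symm
  mul_assoc _ _ _ := rfl
  one_mul _ := rfl
  mul_one _ := rfl
  inv_mul_cancel := AddEquiv.self_trans_symm

@[simp] lemma AddAut.group_mul_apply {A : Type*} [Add A] (e₁ e₂ : AddAut A) (m : A) :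
    (e₁ * e₂) m = e₁ (e₂ m) := rfl
@[simp] lemma AddAut.group_one_apply {A : Type*} [Add A] (m : A) : (1 : AddAut A) m = m := rfl
@[simp] lemma AddAut.group_inv_apply {A : Type*} [Add A] (e : AddAut A) (m : A) :
    e⁻¹ m = e.symm m := rfl

/-- The automorphism of ℤ² given by the matrix A = [[2,1],[1,1]]. -/
def α : AddAut (ℤ × ℤ) where
  toFun p := (2 * p.1 + p.2, p.1 + p.2)
  invFun p := (p.1 - p.2, -p.1 + 2 * p.2)
  left_inv p := by obtain ⟨x, y⟩ := p; simp only [Prod.mk.injEq]; constructor <;> ring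
  right_inv p := by obtain ⟨x, y⟩ := p; simp only [Prod.mk.injEq]; constructor <;> ring
  map_add' p q := by simp only [Prod.fst_add, Prod.snd_add, Prod.mk_add_mk, Prod.mk.injEq]; constructor <;> ring

/-- The automorphism of ℤ² given by the matrix M = [[0,1],[-1,0]]. -/
def μ : AddAut (ℤ × ℤ) where
  toFun p := (p.2, -p.1)
  invFun p := (-p.2, p.1)
  left_inv p := by simp
  right_inv p := by simp
  map_add' p q := by simp only [Prod.fst_add, Prod.snd_add, Prod.mk_add_mk, Prod.mk.injEq]; exact ⟨trivial, by ring⟩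

/-- The semidirect product G = ℤ² ⋊_α ℤ. -/
@[ext] structure G where
  x : ℤ × ℤ
  n : ℤ

instance : Mul G := ⟨fun g h => ⟨g.x + (α ^ g.n) h.x, g.n + h.n⟩⟩
instance : One G := ⟨⟨0, 0⟩⟩
instance : Inv G := ⟨fun g => ⟨-((α ^ (-g.n)) g.x), -g.n⟩⟩

lemma G.mul_def (g h : G) : g * h = ⟨g.x + (α ^ g.n) h.x, g.n + h.n⟩ := rfl
lemma G.one_def : (1 : G) = ⟨0, 0⟩ := rfl
lemma G.inv_def (g : G) : g⁻¹ = ⟨-((α ^ (-g.n)) g.x), -g.n⟩ := rfl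

instance : Group G where
  mul_assoc a b c := by
    ext : 1
    · show (a.x + (α ^ a.n) b.x) + (α ^ (a.n + b.n)) c.x
        = a.x + (α ^ a.n) (b.x + (α ^ b.n) c.x)
      rw [zpow_add, AddAut.group_mul_apply, map_add]; abel
    · show a.n + b.n + c.n = a.n + (b.n + c.n); ring
  one_mul a := by
    ext : 1
    · show (0 : ℤ × ℤ) + (α ^ (0:ℤ)) a.x = a.x
      simp
    · show (0 : ℤ) + a.n = a.n; ring
  mul_one a := by
    ext : 1
    · show a.x + (α ^ a.n) 0 = a.x
      simp
    · show a.n + 0 = a.n; ring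
  inv_mul_cancel a := by
    ext : 1
    · show -((α ^ (-a.n)) a.x) + (α ^ (-a.n)) a.x = 0
      simp
    · show -a.n + a.n = 0; ring

lemma mu_alpha : μ * α = α⁻¹ * μ := by
  apply AddEquiv.ext
  intro p
  rw [AddAut.group_mul_apply, AddAut.group_mul_apply]
  show μ (α p) = α.symm (μ p)
  show ((α p).2, -(α p).1) = α.symm (p.2, -p.1)
  show ((p.1 + p.2 : ℤ), -(2 * p.1 + p.2)) = (p.2 - (-p.1), -p.2 + 2 * (-p.1))
  simp only [Prod.mk.injEq]; constructor <;> ring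

lemma mu_alpha_conj : μ * α * μ⁻¹ = α⁻¹ := by
  rw [mu_alpha, mul_assoc]
  simp

lemma mu_alpha_zpow (n : ℤ) : μ * α ^ n = α ^ (-n) * μ := by
  have h : MulAut.conj μ (α ^ n) = α ^ (-n) := by
    rw [map_zpow, MulAut.conj_apply, mu_alpha_conj, inv_zpow, zpow_neg]
  rw [MulAut.conj_apply] at h
  calc μ * α ^ n = (μ * α ^ n * μ⁻¹) * μ := by group
    _ = α ^ (-n) * μ := by rw [h]

/-- The automorphism φ((m,k),n) = ((k,-m),-n). -/
def φ : G ≃* G where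
  toFun g := ⟨μ g.x, -g.n⟩
  invFun g := ⟨μ⁻¹ g.x, -g.n⟩
  left_inv g := by
    ext : 1
    · show μ⁻¹ (μ g.x) = g.x
      simp
    · simp
  right_inv g := by
    ext : 1
    · show μ (μ⁻¹ g.x) = g.x
      simp
    · simp
  map_mul' g h := by
    ext : 1
    · show μ (g.x + (α ^ g.n) h.x) = μ g.x + (α ^ (-g.n)) (μ h.x)
      rw [map_add]
      congr 1
      calc μ ((α ^ g.n) h.x) = (μ * α ^ g.n) h.x := rfl
        _ = (α ^ (-g.n) * μ) h.x := by rw [mu_alpha_zpow]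
        _ = (α ^ (-g.n)) (μ h.x) := rfl
    · show -(g.n + h.n) = -g.n + -h.n; ring

/-!
On level 0 the group law is addition in `ℤ²` and `φ` acts as `μ`, so the `φ`-twisted conjugate of
`w` by `u` is `w + (1 - μ) u`. The matrix of `1 - μ` is `[[1,-1],[1,1]]`, whose image is the lattice
of pairs with even coordinate sum.
-/

lemma G.mk_zero_mul_mk_zero (v w : ℤ × ℤ) : (⟨v, 0⟩ : G) * ⟨w, 0⟩ = ⟨v + w, 0⟩ := by
  simp [G.mul_def]

lemma G.inv_mk_zero (v : ℤ × ℤ) : (⟨v, 0⟩ : G)⁻¹ = ⟨-v, 0⟩ := by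
  simp [G.inv_def]

lemma φ_mk_zero (v : ℤ × ℤ) : φ ⟨v, 0⟩ = ⟨μ v, 0⟩ := by
  ext : 1 <;> simp [φ]

lemma twisted_conj_mk_zero (v w : ℤ × ℤ) :
    (⟨v, 0⟩ : G) * ⟨w, 0⟩ * (φ ⟨v, 0⟩)⁻¹ = ⟨w + (v - μ v), 0⟩ := by
  rw [φ_mk_zero, G.inv_mk_zero, G.mk_zero_mul_mk_zero, G.mk_zero_mul_mk_zero]
  congr 1
  abel

lemma μ_apply (p : ℤ × ℤ) : μ p = (p.2, -p.1) := rfl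

lemma exists_sub_μ_eq_iff (p : ℤ × ℤ) : (∃ v, v - μ v = p) ↔ 2 ∣ p.1 + p.2 := by
  obtain ⟨a, b⟩ := p
  simp only [μ_apply, Prod.mk_sub_mk, sub_neg_eq_add, Prod.mk.injEq, Prod.exists]
  constructor
  · rintro ⟨x, y, rfl, rfl⟩
    exact ⟨x, by ring⟩
  · rintro ⟨t, ht⟩
    exact ⟨t, t - a, by ring, by linarith⟩

lemma exists_twisted_conj_mk_zero_iff (v w : ℤ × ℤ) :
    (∃ u, (⟨w, 0⟩ : G) = ⟨u, 0⟩ * ⟨v, 0⟩ * (φ ⟨u, 0⟩)⁻¹) ↔ ∃ u, u - μ u = w - v := by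
  simp only [twisted_conj_mk_zero, G.mk.injEq, and_true]
  refine exists_congr fun u => ?_
  rw [eq_comm]
  exact eq_sub_iff_add_eq'.symm

theorem stmt6 (m k m' k' : ℤ) :
    (∃ x y : ℤ, (⟨(m', k'), 0⟩ : G) = ⟨(x, y), 0⟩ * ⟨(m, k), 0⟩ * (φ ⟨(x, y), 0⟩)⁻¹) ↔
      Int.ModEq 2 (m + k) (m' + k') := by
  rw [← Prod.exists', exists_twisted_conj_mk_zero_iff, exists_sub_μ_eq_iff, Int.modEq_iff_dvd]
  simp only [Prod.mk_sub_mk, sub_add_sub_comm]
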